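/- arXiv:1305.0501 — 2 statements merged into one kernel-verified Lean document; each statement's English description precedes it below -/
import Mathlib

section
/- Let X be a Polish metric space, G ⊆ Xⁿ a closed subset, and D ⊆ X a countable set such that D is dense in X and Dⁿ ∩ G is dense in G. Let φ : X → U be an isometric embedding into a metric space U with closed F ⊆ Uⁿ such that for all d⃗ ∈ Dⁿ: d⃗ ∈ G ↔ φⁿ(d⃗) ∈ F, and dist(d⃗, G) = dist(φⁿ(d⃗), F) whenever d⃗ ∉ G. Then for all x⃗ ∈ Xⁿ: x⃗ ∈ G ↔ φⁿ(x⃗) ∈ F. -/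
/-- Distance of a tuple to a set of tuples in the sum (ℓ¹) metric on `Fin n → X`. -/
noncomputable def tupleInfDist {X : Type*} [MetricSpace X] {n : ℕ}
    (x : Fin n → X) (G : Set (Fin n → X)) : ℝ :=
  sInf ((fun g : Fin n → X => ∑ i, dist (x i) (g i)) '' G)

lemma tupleInfDist_bddBelow {X : Type*} [MetricSpace X] {n : ℕ}
    (x : Fin n → X) (G : Set (Fin n → X)) :
    BddBelow ((fun g : Fin n → X => ∑ i, dist (x i) (g i)) '' G) := by
  refine ⟨0, ?_⟩
  rintro _ ⟨g, hg, rfl⟩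
  exact Finset.sum_nonneg fun i _ => dist_nonneg

lemma tupleInfDist_le {X : Type*} [MetricSpace X] {n : ℕ}
    {x g : Fin n → X} {G : Set (Fin n → X)} (hg : g ∈ G) :
    tupleInfDist x G ≤ ∑ i, dist (x i) (g i) :=
  csInf_le (tupleInfDist_bddBelow x G) ⟨g, hg, rfl⟩

lemma le_tupleInfDist {X : Type*} [MetricSpace X] {n : ℕ}
    {x : Fin n → X} {G : Set (Fin n → X)} (hne : G.Nonempty) {c : ℝ}
    (h : ∀ g ∈ G, c ≤ ∑ i, dist (x i) (g i)) : c ≤ tupleInfDist x G := by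
  refine le_csInf (hne.image _) ?_
  rintro _ ⟨g, hg, rfl⟩
  exact h g hg

lemma infDist_le_tupleInfDist {X : Type*} [MetricSpace X] {n : ℕ}
    {x : Fin n → X} {G : Set (Fin n → X)} (hne : G.Nonempty) :
    Metric.infDist x G ≤ tupleInfDist x G := by
  refine le_tupleInfDist hne fun g hg => ?_
  refine le_trans (Metric.infDist_le_dist_of_mem hg) ?_
  have hnn : (0:ℝ) ≤ ∑ i, dist (x i) (g i) :=
    Finset.sum_nonneg fun i _ => dist_nonneg
  rw [dist_pi_le_iff hnn]
  intro i
  exact Finset.single_le_sum (fun j _ => dist_nonneg) (Finset.mem_univ i)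

theorem extension_of_relation_reduction {X U : Type*} [MetricSpace X] [MetricSpace U]
    [CompleteSpace X] [TopologicalSpace.SeparableSpace X] {n : ℕ}
    (G : Set (Fin n → X)) (hG : IsClosed G)
    (F : Set (Fin n → U)) (hF : IsClosed F)
    (D : Set X) (hDcount : D.Countable) (hDdense : Dense D)
    (hDG : G ⊆ closure ({g : Fin n → X | ∀ i, g i ∈ D} ∩ G))
    (φ : X → U) (hφ : Isometry φ)
    (hmem : ∀ d : Fin n → X, (∀ i, d i ∈ D) → (d ∈ G ↔ (fun i => φ (d i)) ∈ F))
    (hdist : ∀ d : Fin n → X, (∀ i, d i ∈ D) → d ∉ G →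
      tupleInfDist d G = tupleInfDist (fun i => φ (d i)) F) :
    ∀ x : Fin n → X, x ∈ G ↔ (fun i => φ (x i)) ∈ F := by
  have hΦcont : Continuous (fun y : Fin n → X => fun i => φ (y i)) :=
    continuous_pi fun i => hφ.continuous.comp (continuous_apply i)
  intro x
  constructor
  · intro hx
    obtain ⟨u, hu, hlim⟩ := mem_closure_iff_seq_limit.mp (hDG hx)
    have hFmem : ∀ k, (fun i => φ (u k i)) ∈ F := fun k =>
      (hmem (u k) (hu k).1).mp (hu k).2
    exact hF.mem_of_tendsto ((hΦcont.continuousAt).tendsto.comp hlim)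
      (Filter.Eventually.of_forall hFmem)
  · intro hφx
    by_contra hxG
    rcases Nat.eq_zero_or_pos n with rfl | hn
    · exact hxG ((hmem x (fun i => i.elim0)).mpr hφx)
    haveI : Nonempty X := ⟨x ⟨0, hn⟩⟩
    rcases G.eq_empty_or_nonempty with rfl | hGne
    · -- G empty: pick any d ∈ Dⁿ; tupleInfDist d ∅ = 0, so φd is at distance 0 from F
      obtain ⟨a, ha⟩ := hDdense.nonempty
      set d : Fin n → X := fun _ => a with hd
      have hdD : ∀ i, d i ∈ D := fun _ => ha
      have hdG : d ∉ ( ∅ : Set (Fin n → X)) := by simp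
      have h0 : tupleInfDist (fun i => φ (d i)) F = 0 := by
        rw [← hdist d hdD hdG]
        simp [tupleInfDist]
      have hFne : F.Nonempty := ⟨_, hφx⟩
      have hle : Metric.infDist (fun i => φ (d i)) F ≤ 0 := by
        rw [← h0]; exact infDist_le_tupleInfDist hFne
      have : (fun i => φ (d i)) ∈ F := by
        rw [← hF.closure_eq]
        exact Metric.mem_closure_iff_infDist_zero hFne |>.mpr
          (le_antisymm hle (Metric.infDist_nonneg))
      exact (hmem d hdD).not.mp hdG this
    · set r := tupleInfDist x G with hr
      have hrpos : 0 < r := by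
        have h1 : 0 < Metric.infDist x G :=
          (hG.notMem_iff_infDist_pos hGne).mp hxG
        exact lt_of_lt_of_le h1 (infDist_le_tupleInfDist hGne)
      set δ : ℝ := r / (2 * (n + 1)) with hδ
      have hδpos : 0 < δ := by positivity
      have hsel : ∀ i : Fin n, ∃ y ∈ D, dist (x i) y < δ := by
        intro i
        obtain ⟨y, hy1, hy2⟩ := Metric.dense_iff.mp hDdense (x i) δ hδpos
        exact ⟨y, hy2, by rwa [dist_comm, ← Metric.mem_ball]⟩
      choose d hdD hdclose using hsel
      set ε : ℝ := ∑ i, dist (x i) (d i) with hε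
      have hεnn : 0 ≤ ε := Finset.sum_nonneg fun i _ => dist_nonneg
      have hεlt : ε < r / 2 := by
        have h1 : ε < ∑ _i : Fin n, δ := by
          refine Finset.sum_lt_sum_of_nonempty ?_ fun i _ => hdclose i
          haveI : Nonempty (Fin n) := Fin.pos_iff_nonempty.mp hn
          exact Finset.univ_nonempty
        have h2 : (∑ _i : Fin n, δ) = n * δ := by
          simp [Finset.sum_const, nsmul_eq_mul]
        have h3 : (n : ℝ) * δ ≤ r / 2 := by
          have hn0 : (0:ℝ) ≤ n := Nat.cast_nonneg n
          show (n : ℝ) * (r / (2 * (n + 1))) ≤ r / 2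
          rw [mul_div_assoc', div_le_div_iff₀ (by positivity) (by norm_num)]
          nlinarith
        linarith [h1, h2 ▸ h1]
      have hdG : d ∉ G := by
        intro hdG
        have := tupleInfDist_le (x := x) hdG
        rw [← hr, ← hε] at this
        linarith
      have hlow : r - ε ≤ tupleInfDist d G := by
        refine le_tupleInfDist hGne fun g hg => ?_
        have h1 : r ≤ ∑ i, dist (x i) (g i) := tupleInfDist_le hg
        have h2 : ∑ i, dist (x i) (g i) ≤ ε + ∑ i, dist (d i) (g i) := by
          rw [hε, ← Finset.sum_add_distrib]
          exact Finset.sum_le_sum fun i _ => dist_triangle _ _ _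
        linarith
      have hup : tupleInfDist (fun i => φ (d i)) F ≤ ε := by
        have := tupleInfDist_le (x := fun i => φ (d i)) hφx
        calc tupleInfDist (fun i => φ (d i)) F ≤ ∑ i, dist (φ (d i)) (φ (x i)) := this
          _ = ∑ i, dist (x i) (d i) := by
              simp [hφ.dist_eq, dist_comm]
      rw [← hdist d hdD hdG] at hup
      linarith
end

section
/- Let (d_i)_{i<k} be real numbers d_i = d(d_k, d_i) from a finite metric space M = {d_1,…,d_k}, and v_1,…,v_{k−1} points in a metric space with |d(v_i, v_j) − d_M(d_i, d_j)| < 1/2^{l+k+1} for all i,j < k. Choose a permutation i_1,…,i_{k−1} of {1,…,k−1} with d_M(d_k, d_{i_1}) ≥ … ≥ d_M(d_k, d_{i_{k−1}}), and reals η_j with d_M(d_k, d_{i_j}) + (2j−1)/(k·2^{l+1}) ≤ η_j ≤ d_M(d_k, d_{i_j}) + 2j/(k·2^{l+1}). Then for all i < j < k: η_i − η_j ≤ d(v_{i_i}, v_{i_j}) ≤ η_i + η_j; i.e., the assignment of distance η_j from a new point to v_{i_j} satisfies all triangle inequalities. -/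
/-!
Since `d(p, x) - d(p, y) ≤ d(x, y) ≤ d(p, x) + d(p, y)` in `M`, prescribing distances
`a ≈ d(p, x)`, `b ≈ d(p, y)` from a new point to approximations `u, w` of `x, y` is consistent
with the triangle inequality as soon as the excesses `a - d(p, x)` and `b - d(p, y)` beat the
approximation error `ε` in the right way. The staggered intervals for `η` make the excess grow
by at least `1 / ((m + 1) 2^(l + 1))` from one index to the next, and this dominates the error
`1 / 2^(l + m + 2)`.
-/

theorem sub_le_dist_and_dist_le_add_of_abs_dist_sub_le
    {M V : Type*} [PseudoMetricSpace M] [PseudoMetricSpace V]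
    {p x y : M} {u w : V} {a b ε : ℝ}
    (huw : |dist u w - dist x y| ≤ ε)
    (hsub : a - dist p x + ε ≤ b - dist p y)
    (hadd : ε ≤ (a - dist p x) + (b - dist p y)) :
    a - b ≤ dist u w ∧ dist u w ≤ a + b := by
  have hlower : dist p x - dist p y ≤ dist x y := by
    simpa only [dist_comm p] using dist_triangle_right x p y |> sub_le_iff_le_add.mpr
  have hupper : dist x y ≤ dist p x + dist p y := dist_triangle_left x y p
  obtain ⟨hε₁, hε₂⟩ := abs_le.mp huw
  constructor <;> linarith

theorem one_div_two_pow_le_one_div_succ_mul_two_pow (m l : ℕ) :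
    (1 : ℝ) / 2 ^ (l + m + 2) ≤ 1 / ((m + 1) * 2 ^ (l + 1)) := by
  have hm : (m : ℝ) + 1 ≤ 2 ^ (m + 1) := by exact_mod_cast (Nat.lt_two_pow_self (n := m + 1)).le
  apply one_div_le_one_div_of_le (by positivity)
  calc ((m : ℝ) + 1) * 2 ^ (l + 1) ≤ 2 ^ (m + 1) * 2 ^ (l + 1) := by gcongr
    _ = 2 ^ (l + m + 2) := by rw [← pow_add]; ring_nf

theorem lemma_one_point_triangle_inequalities_general {M V : Type*} [MetricSpace M] [MetricSpace V]
    (m l : ℕ)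
    (p : M) (q : Fin m → M) (v : Fin m → V)
    (hv : ∀ i j : Fin m,
      |dist (v i) (v j) - dist (q i) (q j)| < 1 / 2 ^ (l + m + 2))
    (σ : Equiv.Perm (Fin m))
    (η : Fin m → ℝ)
    (hη : ∀ j : Fin m,
      dist p (q (σ j)) + (2 * (j : ℕ) + 1) / ((m + 1) * 2 ^ (l + 1)) ≤ η j ∧
      η j ≤ dist p (q (σ j)) + (2 * (j : ℕ) + 2) / ((m + 1) * 2 ^ (l + 1))) :
    ∀ i j : Fin m, i < j →
      η i - η j ≤ dist (v (σ i)) (v (σ j)) ∧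
      dist (v (σ i)) (v (σ j)) ≤ η i + η j := by
  intro i j hij
  set D : ℝ := (m + 1) * 2 ^ (l + 1)
  have hD : 0 < D := by positivity
  have hε : |dist (v (σ i)) (v (σ j)) - dist (q (σ i)) (q (σ j))| ≤ 1 / D :=
    (hv (σ i) (σ j)).le.trans (one_div_two_pow_le_one_div_succ_mul_two_pow m l)
  have hgap : (2 * (i : ℕ) + 2 : ℝ) / D + 1 / D ≤ (2 * (j : ℕ) + 1) / D := by
    rw [← add_div]
    gcongr
    exact_mod_cast (by omega : 2 * (i : ℕ) + 2 ≤ 2 * (j : ℕ))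
  have hsum : 1 / D ≤ (2 * (i : ℕ) + 1 : ℝ) / D + (2 * (j : ℕ) + 1) / D := by
    rw [← add_div]
    gcongr
    linarith [(i : ℕ).cast_nonneg (α := ℝ), (j : ℕ).cast_nonneg (α := ℝ)]
  obtain ⟨hi_low, hi_up⟩ := hη i
  have hj_low := (hη j).1
  exact sub_le_dist_and_dist_le_add_of_abs_dist_sub_le hε
    (by linear_combination hi_up + hj_low + hgap) (by linear_combination hi_low + hj_low + hsum)

theorem lemma_one_point_triangle_inequalities {M V : Type*} [MetricSpace M] [MetricSpace V]
    (m l : ℕ) (hm : 1 ≤ m) (hl : 1 ≤ l)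
    (p : M) (q : Fin m → M) (v : Fin m → V)
    (hv : ∀ i j : Fin m,
      |dist (v i) (v j) - dist (q i) (q j)| < 1 / 2 ^ (l + m + 2))
    (σ : Equiv.Perm (Fin m))
    (hσ : ∀ i j : Fin m, i ≤ j → dist p (q (σ j)) ≤ dist p (q (σ i)))
    (η : Fin m → ℝ)
    (hη : ∀ j : Fin m,
      dist p (q (σ j)) + (2 * (j : ℕ) + 1) / ((m + 1) * 2 ^ (l + 1)) ≤ η j ∧
      η j ≤ dist p (q (σ j)) + (2 * (j : ℕ) + 2) / ((m + 1) * 2 ^ (l + 1))) :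
    ∀ i j : Fin m, i < j →
      η i - η j ≤ dist (v (σ i)) (v (σ j)) ∧
      dist (v (σ i)) (v (σ j)) ≤ η i + η j :=
  lemma_one_point_triangle_inequalities_general m l p q v hv σ η hη
end
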